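/- arXiv:math/0206099 — 3 statements merged into one kernel-verified Lean document; each statement's English description precedes it below -/
import Mathlib

section
/- If 0 < α < 3 - 2√2 and 0 < β < 3 - 2√2, then both roots y of the quadratic equation -4α·y² + (1-α)(1-β)·y - β = 0 are real, distinct, and strictly positive. -/
lemma key_ineq (x : ℝ) (hx0 : 0 < x) (hx : x < 3 - 2 * Real.sqrt 2) :
    (1 - x) ^ 2 > 4 * x := by
  have hs : Real.sqrt 2 ^ 2 = 2 := Real.sq_sqrt (by norm_num)
  have hs0 : (0:ℝ) ≤ Real.sqrt 2 := Real.sqrt_nonneg 2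
  nlinarith [sq_nonneg (3 - 2 * Real.sqrt 2 - x), sq_nonneg (Real.sqrt 2 - 1)]

lemma lt_one' (x : ℝ) (hx0 : 0 < x) (hx : x < 3 - 2 * Real.sqrt 2) : x < 1 := by
  have hs : Real.sqrt 2 ^ 2 = 2 := Real.sq_sqrt (by norm_num)
  have hs0 : (0:ℝ) ≤ Real.sqrt 2 := Real.sqrt_nonneg 2
  nlinarith [sq_nonneg (Real.sqrt 2 - 1)]

/-- If `0 < α < 3 - 2√2` and `0 < β < 3 - 2√2`, then the quadratic
`-4α·y² + (1-α)(1-β)·y - β = 0` has exactly two roots, both real, distinct,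
and strictly positive. -/
theorem stmt_5 (α β : ℝ) (hα0 : 0 < α) (hα : α < 3 - 2 * Real.sqrt 2)
    (hβ0 : 0 < β) (hβ : β < 3 - 2 * Real.sqrt 2) :
    ∃ y₁ y₂ : ℝ, y₁ ≠ y₂ ∧ 0 < y₁ ∧ 0 < y₂ ∧
      ∀ y : ℂ, -4 * (α : ℂ) * y ^ 2 + ((1 : ℂ) - α) * ((1 : ℂ) - β) * y - β = 0 ↔
        y = (y₁ : ℂ) ∨ y = (y₂ : ℂ) := by
  have hα1 : α < 1 := lt_one' α hα0 hα
  have hβ1 : β < 1 := lt_one' β hβ0 hβ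
  have hA : (1 - α) ^ 2 > 4 * α := key_ineq α hα0 hα
  have hB : (1 - β) ^ 2 > 4 * β := key_ineq β hβ0 hβ
  set c : ℝ := (1 - α) * (1 - β) with hc
  have hcpos : 0 < c := by nlinarith
  set D : ℝ := c ^ 2 - 16 * α * β with hD
  have hDpos : 0 < D := by
    have h1 : (1 - α) ^ 2 * (1 - β) ^ 2 > (4 * α) * (4 * β) := by
      apply mul_lt_mul'' hA hB <;> positivity
    simp only [hD, hc]; nlinarith
  have hsD : Real.sqrt D ^ 2 = D := Real.sq_sqrt hDpos.le
  have hsD0 : 0 < Real.sqrt D := Real.sqrt_pos.mpr hDpos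
  have hcD : Real.sqrt D < c := by
    nlinarith [sq_nonneg (Real.sqrt D - c)]
  refine ⟨(c - Real.sqrt D) / (8 * α), (c + Real.sqrt D) / (8 * α), ?_, ?_, ?_, ?_⟩
  · intro h
    have : c - Real.sqrt D = c + Real.sqrt D := by
      field_simp at h; linarith
    linarith
  · apply div_pos (by linarith) (by linarith)
  · apply div_pos (by linarith) (by linarith)
  · intro y
    have hαC : (α : ℂ) ≠ 0 := by exact_mod_cast hα0.ne'
    have hsum : ((c - Real.sqrt D) / (8 * α)) + ((c + Real.sqrt D) / (8 * α))
        = c / (4 * α) := by field_simp; ring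
    have hprod : ((c - Real.sqrt D) / (8 * α)) * ((c + Real.sqrt D) / (8 * α))
        = β / (4 * α) := by
      rw [div_mul_div_comm]
      have h1 : (c - Real.sqrt D) * (c + Real.sqrt D) = 16 * α * β := by
        have h2 : (c - Real.sqrt D) * (c + Real.sqrt D) = c ^ 2 - Real.sqrt D ^ 2 := by
          ring
        rw [h2, hsD]; simp [hD]
      rw [h1]; field_simp; ring
    have key : -4 * (α : ℂ) * y ^ 2 + ((1 : ℂ) - α) * ((1 : ℂ) - β) * y - β
        = -4 * (α : ℂ) * (y - (((c - Real.sqrt D) / (8 * α) : ℝ) : ℂ))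
            * (y - (((c + Real.sqrt D) / (8 * α) : ℝ) : ℂ)) := by
      have hsumC : (((c - Real.sqrt D) / (8 * α) : ℝ) : ℂ)
            + (((c + Real.sqrt D) / (8 * α) : ℝ) : ℂ) = (c : ℂ) / (4 * (α : ℂ)) := by
        have := congrArg (fun x : ℝ => (x : ℂ)) hsum
        push_cast at this
        convert this using 2 <;> push_cast <;> ring
      have hprodC : (((c - Real.sqrt D) / (8 * α) : ℝ) : ℂ)
            * (((c + Real.sqrt D) / (8 * α) : ℝ) : ℂ) = (β : ℂ) / (4 * (α : ℂ)) := by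
        have := congrArg (fun x : ℝ => (x : ℂ)) hprod
        push_cast at this
        convert this using 2 <;> push_cast <;> ring
      have hcC : ((c : ℝ) : ℂ) = ((1 : ℂ) - α) * ((1 : ℂ) - β) := by
        rw [hc]; push_cast; ring
      have h4α : (4 : ℂ) * α ≠ 0 := by
        intro h; apply hαC; simpa using h
      have hsumC' : (4 : ℂ) * α * ((((c - Real.sqrt D) / (8 * α) : ℝ) : ℂ)
            + (((c + Real.sqrt D) / (8 * α) : ℝ) : ℂ)) = (c : ℂ) := by
        rw [hsumC]; field_simp
      have hprodC' : (4 : ℂ) * α * ((((c - Real.sqrt D) / (8 * α) : ℝ) : ℂ)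
            * (((c + Real.sqrt D) / (8 * α) : ℝ) : ℂ)) = (β : ℂ) := by
        rw [hprodC]; field_simp
      rw [← hcC]
      linear_combination (-y) * hsumC' + hprodC'
    rw [key]
    constructor
    · intro h
      rcases mul_eq_zero.mp h with h1 | h2
      · rcases mul_eq_zero.mp h1 with h3 | h4
        · exact absurd (by simpa using h3) hαC
        · exact Or.inl (sub_eq_zero.mp h4)
      · exact Or.inr (sub_eq_zero.mp h2)
    · rintro (h | h) <;> subst h <;> ring
end

section
/- Let α, β be real numbers with α > 0, β > 0, α ≠ 1, β ≠ 1, αβ ≠ 1, and (1-α)²(1-β)² - 16αβ ≠ 0, and suppose (1-α)(1-β) > 0. Then the system consisting of (i) -β·p₀₂² - β·p₁₃² + (1-α)(1-β)·p₀₃² = 0, (ii) p₀₁p₂₃ - p₀₂p₁₃ + p₀₃p₁₂ = 0, (iii) α·p₀₁² = α·p₀₃² = β·p₁₂² = β·p₂₃², has exactly 32 solutions in complex projective space P⁵ (in coordinates (p₀₁:p₀₂:p₀₃:p₁₂:p₁₃:p₂₃)). -/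
/-- The Plücker-coordinate tangency system for lines tangent to the four
quadrics `Q₁,…,Q₄`, in coordinates `(p₀₁,p₀₂,p₀₃,p₁₂,p₁₃,p₂₃) = (v 0,…,v 5)`. -/
def tangencySystem (α β : ℝ) (v : Fin 6 → ℂ) : Prop :=
  -(β : ℂ) * (v 1) ^ 2 - (β : ℂ) * (v 4) ^ 2
      + ((1 : ℂ) - α) * ((1 : ℂ) - β) * (v 2) ^ 2 = 0 ∧
  v 0 * v 5 - v 1 * v 4 + v 2 * v 3 = 0 ∧
  (α : ℂ) * (v 0) ^ 2 = (α : ℂ) * (v 2) ^ 2 ∧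
  (α : ℂ) * (v 2) ^ 2 = (β : ℂ) * (v 3) ^ 2 ∧
  (β : ℂ) * (v 3) ^ 2 = (β : ℂ) * (v 5) ^ 2

namespace Stmt12

lemma sq_cases {x y : ℂ} (h : x ^ 2 = y ^ 2) : x = y ∨ x = -y := by
  have h' : (x - y) * (x + y) = 0 := by linear_combination h
  rcases mul_eq_zero.mp h' with h'' | h''
  · exact Or.inl (sub_eq_zero.mp h'')
  · exact Or.inr (by linear_combination h'')

def sgn (s : Bool) : ℂ := if s then 1 else -1

lemma sgn_true : sgn true = 1 := rfl
lemma sgn_false : sgn false = -1 := rfl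
lemma sgn_sq (s : Bool) : sgn s ^ 2 = 1 := by cases s <;> norm_num [sgn]
lemma sgn_ne_zero (s : Bool) : sgn s ≠ 0 := by cases s <;> norm_num [sgn]
lemma sgn_inj {s t : Bool} (h : sgn s = sgn t) : s = t := by
  cases s <;> cases t <;> first | rfl | (norm_num [sgn] at h)
lemma sgn_not (s : Bool) : sgn (!s) = -sgn s := by cases s <;> norm_num [sgn]

lemma exists_sgn {x y : ℂ} (h : x ^ 2 = y ^ 2) : ∃ s, x = sgn s * y := by
  rcases sq_cases h with h' | h'
  · exact ⟨true, by rw [sgn_true, one_mul]; exact h'⟩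
  · exact ⟨false, by rw [sgn_false]; rw [h']; ring⟩

noncomputable def pr (p q : ℂ) (s t : Bool) : ℂ × ℂ :=
  ((sgn s * p + sgn t * q) / 2, (sgn s * p - sgn t * q) / 2)

lemma pr_sum_sq (p q : ℂ) (s t : Bool) :
    (pr p q s t).1 ^ 2 + (pr p q s t).2 ^ 2 = (p ^ 2 + q ^ 2) / 2 := by
  simp only [pr]
  linear_combination (p ^ 2 / 2) * sgn_sq s + (q ^ 2 / 2) * sgn_sq t

lemma pr_mul (p q : ℂ) (s t : Bool) :
    (pr p q s t).1 * (pr p q s t).2 = (p ^ 2 - q ^ 2) / 4 := by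
  simp only [pr]
  linear_combination (p ^ 2 / 4) * sgn_sq s - (q ^ 2 / 4) * sgn_sq t

lemma pr_inj {p q : ℂ} (hp : p ≠ 0) (hq : q ≠ 0) {s t s' t' : Bool}
    (h : pr p q s t = pr p q s' t') : s = s' ∧ t = t' := by
  have h1 := congrArg (fun z : ℂ × ℂ => z.1 + z.2) h
  have h2 := congrArg (fun z : ℂ × ℂ => z.1 - z.2) h
  simp only [pr] at h1 h2
  have hs : sgn s * p = sgn s' * p := by linear_combination h1
  have ht : sgn t * q = sgn t' * q := by linear_combination h2
  exact ⟨sgn_inj (mul_right_cancel₀ hp hs), sgn_inj (mul_right_cancel₀ hq ht)⟩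

lemma pr_complete {p q b e : ℂ} (h1 : (b + e) ^ 2 = p ^ 2) (h2 : (b - e) ^ 2 = q ^ 2) :
    ∃ s t, (b, e) = pr p q s t := by
  obtain ⟨s, hs⟩ := exists_sgn h1
  obtain ⟨t, ht⟩ := exists_sgn h2
  refine ⟨s, t, ?_⟩
  simp only [pr, Prod.ext_iff]
  exact ⟨by linear_combination (hs + ht) / 2, by linear_combination (hs - ht) / 2⟩

def pvec (a b d e f : ℂ) : Fin 6 → ℂ := ![a, b, 1, d, e, f]

lemma pvec_ne_zero (a b d e f : ℂ) : pvec a b d e f ≠ 0 := by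
  intro h
  have := congrFun h 2
  simp [pvec] at this

lemma tangency_pvec_iff (α β : ℝ) (a b d e f : ℂ) :
    tangencySystem α β (pvec a b d e f) ↔
      (-(β : ℂ) * b ^ 2 - (β : ℂ) * e ^ 2 + (1 - (α : ℂ)) * (1 - (β : ℂ)) = 0 ∧
       a * f - b * e + d = 0 ∧
       (α : ℂ) * a ^ 2 = (α : ℂ) ∧
       (α : ℂ) = (β : ℂ) * d ^ 2 ∧
       (β : ℂ) * d ^ 2 = (β : ℂ) * f ^ 2) := by
  have e0 : pvec a b d e f 0 = a := rfl
  have e1 : pvec a b d e f 1 = b := rfl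
  have e2 : pvec a b d e f 2 = 1 := rfl
  have e3 : pvec a b d e f 3 = d := rfl
  have e4 : pvec a b d e f 4 = e := rfl
  have e5 : pvec a b d e f 5 = f := rfl
  unfold tangencySystem
  rw [e0, e1, e2, e3, e4, e5]
  constructor
  · rintro ⟨h1, h2, h3, h4, h5⟩
    exact ⟨by linear_combination h1, by linear_combination h2, by linear_combination h3,
      by linear_combination h4, by linear_combination h5⟩
  · rintro ⟨h1, h2, h3, h4, h5⟩
    exact ⟨by linear_combination h1, by linear_combination h2, by linear_combination h3,
      by linear_combination h4, by linear_combination h5⟩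

def PQ (k u w : ℂ) (δ σ : Bool) : ℂ × ℂ :=
  if σ then (if δ then (u, w) else (w, u)) else (k, k)

abbrev Idx : Type := Bool × Bool × Bool × Bool × Bool

noncomputable def solV (g k u w : ℂ) (i : Idx) : Fin 6 → ℂ :=
  pvec (sgn i.1)
    ((pr (PQ k u w i.2.1 i.2.2.1).1 (PQ k u w i.2.1 i.2.2.1).2 i.2.2.2.1 i.2.2.2.2).1)
    (sgn i.2.1 * g)
    ((pr (PQ k u w i.2.1 i.2.2.1).1 (PQ k u w i.2.1 i.2.2.1).2 i.2.2.2.1 i.2.2.2.2).2)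
    (sgn i.2.2.1 * sgn i.1 * (sgn i.2.1 * g))

lemma solV_tangency (α β : ℝ) (g k u w : ℂ)
    (hgB : (β : ℂ) * g ^ 2 = (α : ℂ))
    (hkB : (β : ℂ) * k ^ 2 = (1 - (α : ℂ)) * (1 - (β : ℂ)))
    (hu : u ^ 2 = k ^ 2 + 4 * g)
    (hw : w ^ 2 = k ^ 2 - 4 * g)
    (i : Idx) :
    tangencySystem α β (solV g k u w i) := by
  obtain ⟨ε, δ, σ, s, t⟩ := i
  simp only [solV]
  rw [tangency_pvec_iff]
  have hs1 := pr_sum_sq (PQ k u w δ σ).1 (PQ k u w δ σ).2 s t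
  have hs2 := pr_mul (PQ k u w δ σ).1 (PQ k u w δ σ).2 s t
  cases ε <;> cases δ <;> cases σ <;>
    simp only [PQ, sgn, if_true, if_false, Bool.false_eq_true, ite_true, ite_false] at hs1 hs2 ⊢ <;>
    refine ⟨?_, ?_, ?_, ?_, ?_⟩ <;>
    first
      | linear_combination (-(β : ℂ)) * hs1 - hkB
      | linear_combination (-(β : ℂ)) * hs1 - ((β : ℂ) / 2) * hu - ((β : ℂ) / 2) * hw - hkB
      | linear_combination -hs2
      | linear_combination -hs2 - hu / 4 + hw / 4
      | linear_combination -hs2 + hu / 4 - hw / 4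
      | linear_combination hgB
      | linear_combination -hgB
      | ring

lemma solV_complete (α β : ℝ) (g k u w a b d e f : ℂ)
    (hA : (α : ℂ) ≠ 0) (hB : (β : ℂ) ≠ 0)
    (hgB : (β : ℂ) * g ^ 2 = (α : ℂ))
    (hkB : (β : ℂ) * k ^ 2 = (1 - (α : ℂ)) * (1 - (β : ℂ)))
    (hu : u ^ 2 = k ^ 2 + 4 * g)
    (hw : w ^ 2 = k ^ 2 - 4 * g)
    (h : tangencySystem α β (pvec a b d e f)) :
    ∃ i, pvec a b d e f = solV g k u w i := by
  rw [tangency_pvec_iff] at h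
  obtain ⟨h1, h2, h3, h4, h5⟩ := h
  obtain ⟨ε, ha⟩ : ∃ ε, a = sgn ε := by
    have ha2 : a ^ 2 = 1 ^ 2 := by
      rw [one_pow]; exact mul_left_cancel₀ hA (by linear_combination h3)
    obtain ⟨ε, hε⟩ := exists_sgn ha2
    exact ⟨ε, by rw [hε, mul_one]⟩
  obtain ⟨δ, hd⟩ : ∃ δ, d = sgn δ * g := by
    have hd2 : d ^ 2 = g ^ 2 := mul_left_cancel₀ hB (by linear_combination -h4 - hgB)
    exact exists_sgn hd2
  obtain ⟨σ, hf⟩ : ∃ σ, f = sgn σ * sgn ε * d := by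
    have hf2 : f ^ 2 = d ^ 2 := (mul_left_cancel₀ hB h5).symm
    rcases sq_cases hf2 with h' | h'
    · exact ⟨ε, by rw [h']; linear_combination -d * (sgn_sq ε)⟩
    · exact ⟨!ε, by rw [h', sgn_not]; linear_combination d * (sgn_sq ε)⟩
  have haf : a * f = sgn σ * d := by
    rw [ha, hf]; linear_combination (sgn σ * d) * sgn_sq ε
  have hbe : b * e = sgn σ * d + d := by linear_combination -h2 + haf
  have hbesq : b ^ 2 + e ^ 2 = k ^ 2 := by
    refine mul_left_cancel₀ hB ?_
    linear_combination -h1 - hkB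
  cases σ with
  | false =>
      have hbe0 : b * e = 0 := by rw [hbe, sgn_false]; ring
      obtain ⟨s, t, hj⟩ := pr_complete
        (show (b + e) ^ 2 = k ^ 2 by linear_combination hbesq + 2 * hbe0)
        (show (b - e) ^ 2 = k ^ 2 by linear_combination hbesq - 2 * hbe0)
      have hbj : b = (pr k k s t).1 := congrArg Prod.fst hj
      have hej : e = (pr k k s t).2 := congrArg Prod.snd hj
      refine ⟨(ε, δ, false, s, t), ?_⟩
      show pvec a b d e f =
        pvec (sgn ε) ((pr k k s t).1) (sgn δ * g) ((pr k k s t).2)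
          (sgn false * sgn ε * (sgn δ * g))
      rw [← hd, ← hf, ← ha, ← hbj, ← hej]
  | true =>
      have hbe2 : b * e = 2 * d := by rw [hbe, sgn_true]; ring
      cases δ with
      | true =>
          have hdg : d = g := by rw [hd, sgn_true, one_mul]
          obtain ⟨s, t, hj⟩ := pr_complete
            (show (b + e) ^ 2 = u ^ 2 by linear_combination hbesq + 2 * hbe2 + 4 * hdg - hu)
            (show (b - e) ^ 2 = w ^ 2 by linear_combination hbesq - 2 * hbe2 - 4 * hdg - hw)
          have hbj : b = (pr u w s t).1 := congrArg Prod.fst hj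
          have hej : e = (pr u w s t).2 := congrArg Prod.snd hj
          refine ⟨(ε, true, true, s, t), ?_⟩
          show pvec a b d e f =
            pvec (sgn ε) ((pr u w s t).1) (sgn true * g) ((pr u w s t).2)
              (sgn true * sgn ε * (sgn true * g))
          rw [← hd, ← hf, ← ha, ← hbj, ← hej]
      | false =>
          have hdg : d = -g := by rw [hd, sgn_false]; ring
          obtain ⟨s, t, hj⟩ := pr_complete
            (show (b + e) ^ 2 = w ^ 2 by linear_combination hbesq + 2 * hbe2 + 4 * hdg - hw)
            (show (b - e) ^ 2 = u ^ 2 by linear_combination hbesq - 2 * hbe2 - 4 * hdg - hu)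
          have hbj : b = (pr w u s t).1 := congrArg Prod.fst hj
          have hej : e = (pr w u s t).2 := congrArg Prod.snd hj
          refine ⟨(ε, false, true, s, t), ?_⟩
          show pvec a b d e f =
            pvec (sgn ε) ((pr w u s t).1) (sgn false * g) ((pr w u s t).2)
              (sgn true * sgn ε * (sgn false * g))
          rw [← hd, ← hf, ← ha, ← hbj, ← hej]


lemma solV_ne_zero (g k u w : ℂ) (i : Idx) : solV g k u w i ≠ 0 :=
  pvec_ne_zero _ _ _ _ _

lemma mk_pvec_inj {a b d e f a' b' d' e' f' : ℂ}
    (h : Projectivization.mk ℂ (pvec a b d e f) (pvec_ne_zero a b d e f) =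
      Projectivization.mk ℂ (pvec a' b' d' e' f') (pvec_ne_zero a' b' d' e' f')) :
    a = a' ∧ b = b' ∧ d = d' ∧ e = e' ∧ f = f' := by
  rw [Projectivization.mk_eq_mk_iff] at h
  obtain ⟨t, ht⟩ := h
  have ht1 : (t : ℂ) = 1 := by
    simpa [pvec, Units.smul_def] using congrFun ht 2
  have key : ∀ i : Fin 6, pvec a' b' d' e' f' i = pvec a b d e f i := by
    intro i
    have := congrFun ht i
    simp only [Units.smul_def, Pi.smul_apply, smul_eq_mul, ht1, one_mul] at this
    exact this
  exact ⟨(key 0).symm, (key 1).symm, (key 3).symm, (key 4).symm, (key 5).symm⟩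

lemma tangency_smul (α β : ℝ) (t : ℂ) (v : Fin 6 → ℂ) (h : tangencySystem α β v) :
    tangencySystem α β (t • v) := by
  obtain ⟨h1, h2, h3, h4, h5⟩ := h
  refine ⟨?_, ?_, ?_, ?_, ?_⟩ <;> simp only [Pi.smul_apply, smul_eq_mul]
  · linear_combination t ^ 2 * h1
  · linear_combination t ^ 2 * h2
  · linear_combination t ^ 2 * h3
  · linear_combination t ^ 2 * h4
  · linear_combination t ^ 2 * h5

lemma tangency_rep_iff (α β : ℝ) (v : Fin 6 → ℂ) (hv : v ≠ 0) :
    tangencySystem α β (Projectivization.mk ℂ v hv).rep ↔ tangencySystem α β v := by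
  obtain ⟨t, ht⟩ := Projectivization.exists_smul_eq_mk_rep ℂ v hv
  constructor
  · intro h
    rw [← ht] at h
    have h2 := tangency_smul α β ((t⁻¹ : ℂˣ) : ℂ) _ h
    rwa [← Units.smul_def, inv_smul_smul] at h2
  · intro h
    rw [← ht, Units.smul_def]
    exact tangency_smul α β _ _ h

lemma solV_point_inj (g k u w : ℂ) (hg : g ≠ 0) (hk : k ≠ 0) (hu0 : u ≠ 0) (hw0 : w ≠ 0)
    {i i' : Idx}
    (h : Projectivization.mk ℂ (solV g k u w i) (solV_ne_zero g k u w i) =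
      Projectivization.mk ℂ (solV g k u w i') (solV_ne_zero g k u w i')) : i = i' := by
  obtain ⟨ε, δ, σ, s, t⟩ := i
  obtain ⟨ε', δ', σ', s', t'⟩ := i'
  obtain ⟨ha, hb, hd, he, hf⟩ := mk_pvec_inj h
  have hε : ε = ε' := sgn_inj ha
  have hδ : δ = δ' := sgn_inj (mul_right_cancel₀ hg hd)
  subst hε; subst hδ
  have hσ : σ = σ' := by
    rw [mul_assoc, mul_assoc] at hf
    exact sgn_inj (mul_right_cancel₀
      (mul_ne_zero (sgn_ne_zero ε) (mul_ne_zero (sgn_ne_zero δ) hg)) hf)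
  subst hσ
  have hP1 : (PQ k u w δ σ).1 ≠ 0 := by
    cases δ <;> cases σ <;>
      simp only [PQ, Bool.false_eq_true, if_true, if_false, ite_true, ite_false] <;>
      assumption
  have hP2 : (PQ k u w δ σ).2 ≠ 0 := by
    cases δ <;> cases σ <;>
      simp only [PQ, Bool.false_eq_true, if_true, if_false, ite_true, ite_false] <;>
      assumption
  obtain ⟨hs, ht⟩ := pr_inj hP1 hP2 (Prod.ext hb he)
  subst hs; subst ht
  rfl

end Stmt12

open Stmt12

/-- For real `α, β` with `α, β > 0`, `α ≠ 1`, `β ≠ 1`, `αβ ≠ 1`,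
`(1-α)²(1-β)² - 16αβ ≠ 0` and `(1-α)(1-β) > 0`, the tangency system has exactly
`32` solutions in the complex projective space `ℙ⁵`. -/
theorem stmt_12 (α β : ℝ) (hα0 : 0 < α) (hβ0 : 0 < β) (hα1 : α ≠ 1) (hβ1 : β ≠ 1)
    (hαβ1 : α * β ≠ 1)
    (hdisc : (1 - α) ^ 2 * (1 - β) ^ 2 - 16 * α * β ≠ 0)
    (hD : 0 < (1 - α) * (1 - β)) :
    Set.ncard {x : Projectivization ℂ (Fin 6 → ℂ) | tangencySystem α β x.rep}
      = 32 := by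
  have hA : (α : ℂ) ≠ 0 := by exact_mod_cast hα0.ne'
  have hB : (β : ℂ) ≠ 0 := by exact_mod_cast hβ0.ne'
  have hA1 : (1 : ℂ) - (α : ℂ) ≠ 0 :=
    sub_ne_zero.mpr (Ne.symm (by exact_mod_cast hα1))
  have hB1 : (1 : ℂ) - (β : ℂ) ≠ 0 :=
    sub_ne_zero.mpr (Ne.symm (by exact_mod_cast hβ1))
  obtain ⟨g, hg2⟩ := IsAlgClosed.exists_pow_nat_eq ((α : ℂ) / (β : ℂ)) (two_pos)
  obtain ⟨k, hk2⟩ := IsAlgClosed.exists_pow_nat_eq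
    ((1 - (α : ℂ)) * (1 - (β : ℂ)) / (β : ℂ)) (two_pos)
  obtain ⟨u, hu⟩ := IsAlgClosed.exists_pow_nat_eq (k ^ 2 + 4 * g) (two_pos)
  obtain ⟨w, hw⟩ := IsAlgClosed.exists_pow_nat_eq (k ^ 2 - 4 * g) (two_pos)
  have hgB : (β : ℂ) * g ^ 2 = (α : ℂ) := by rw [hg2]; field_simp
  have hkB : (β : ℂ) * k ^ 2 = (1 - (α : ℂ)) * (1 - (β : ℂ)) := by rw [hk2]; field_simp
  have hg0 : g ≠ 0 := by
    intro h; apply hA; rw [← hgB, h]; ring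
  have hk0 : k ≠ 0 := by
    intro h
    have h' : (1 - (α : ℂ)) * (1 - (β : ℂ)) = 0 := by rw [← hkB, h]; ring
    rcases mul_eq_zero.mp h' with h'' | h''
    · exact hA1 h''
    · exact hB1 h''
  have hdiscC : (1 - (α : ℂ)) ^ 2 * (1 - (β : ℂ)) ^ 2 - 16 * (α : ℂ) * (β : ℂ) ≠ 0 := by
    intro h
    apply hdisc
    have : (((1 - α) ^ 2 * (1 - β) ^ 2 - 16 * α * β : ℝ) : ℂ) = 0 := by
      push_cast; linear_combination h
    exact_mod_cast this
  have hu0 : u ≠ 0 := by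
    intro h0
    apply hdiscC
    have hz : k ^ 2 + 4 * g = 0 := by rw [← hu, h0]; ring
    linear_combination (-((β : ℂ) * k ^ 2) - (1 - (α : ℂ)) * (1 - (β : ℂ))) * hkB
      + 16 * (β : ℂ) * hgB + (β : ℂ) ^ 2 * (k ^ 2 - 4 * g) * hz
  have hw0 : w ≠ 0 := by
    intro h0
    apply hdiscC
    have hz : k ^ 2 - 4 * g = 0 := by rw [← hw, h0]; ring
    linear_combination (-((β : ℂ) * k ^ 2) - (1 - (α : ℂ)) * (1 - (β : ℂ))) * hkB
      + 16 * (β : ℂ) * hgB + (β : ℂ) ^ 2 * (k ^ 2 + 4 * g) * hz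
  set F : Idx → Projectivization ℂ (Fin 6 → ℂ) :=
    fun i => Projectivization.mk ℂ (solV g k u w i) (solV_ne_zero g k u w i) with hF
  have hset : {x : Projectivization ℂ (Fin 6 → ℂ) | tangencySystem α β x.rep} = Set.range F := by
    ext x
    simp only [Set.mem_setOf_eq, Set.mem_range]
    constructor
    · intro hx
      have hvne := x.rep_nonzero
      set v := x.rep with hv
      have hc : v 2 ≠ 0 := by
        intro h0
        obtain ⟨h1, h2, h3, h4, h5⟩ := hx
        have hv0 : v 0 = 0 := by
          have h00 : (α : ℂ) * v 0 ^ 2 = 0 := by rw [h3, h0]; ring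
          rcases mul_eq_zero.mp h00 with h' | h'
          · exact absurd h' hA
          · exact (pow_eq_zero_iff two_ne_zero).mp h'
        have hv3 : v 3 = 0 := by
          have h00 : (β : ℂ) * v 3 ^ 2 = 0 := by rw [← h4, h0]; ring
          rcases mul_eq_zero.mp h00 with h' | h'
          · exact absurd h' hB
          · exact (pow_eq_zero_iff two_ne_zero).mp h'
        have hv5 : v 5 = 0 := by
          have h00 : (β : ℂ) * v 5 ^ 2 = 0 := by rw [← h5, hv3]; ring
          rcases mul_eq_zero.mp h00 with h' | h'
          · exact absurd h' hB
          · exact (pow_eq_zero_iff two_ne_zero).mp h'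
        have hsum : v 1 ^ 2 + v 4 ^ 2 = 0 := by
          refine mul_left_cancel₀ hB ?_
          rw [h0] at h1
          linear_combination -h1
        have hprod : v 1 * v 4 = 0 := by
          rw [hv0, h0] at h2
          linear_combination -h2
        have hv14 : v 1 = 0 ∧ v 4 = 0 := by
          rcases mul_eq_zero.mp hprod with h' | h'
          · refine ⟨h', ?_⟩
            have : v 4 ^ 2 = 0 := by rw [h'] at hsum; linear_combination hsum
            exact (pow_eq_zero_iff two_ne_zero).mp this
          · refine ⟨?_, h'⟩
            have : v 1 ^ 2 = 0 := by rw [h'] at hsum; linear_combination hsum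
            exact (pow_eq_zero_iff two_ne_zero).mp this
        apply hvne
        funext j
        fin_cases j
        · exact hv0
        · exact hv14.1
        · exact h0
        · exact hv3
        · exact hv14.2
        · exact hv5
      have hveq : pvec (v 0 / v 2) (v 1 / v 2) (v 3 / v 2) (v 4 / v 2) (v 5 / v 2)
          = (v 2)⁻¹ • v := by
        funext j
        fin_cases j
        · show v 0 / v 2 = (v 2)⁻¹ * v 0; rw [div_eq_inv_mul]
        · show v 1 / v 2 = (v 2)⁻¹ * v 1; rw [div_eq_inv_mul]
        · show (1 : ℂ) = (v 2)⁻¹ * v 2; rw [inv_mul_cancel₀ hc]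
        · show v 3 / v 2 = (v 2)⁻¹ * v 3; rw [div_eq_inv_mul]
        · show v 4 / v 2 = (v 2)⁻¹ * v 4; rw [div_eq_inv_mul]
        · show v 5 / v 2 = (v 2)⁻¹ * v 5; rw [div_eq_inv_mul]
      have hxmk : Projectivization.mk ℂ
          (pvec (v 0 / v 2) (v 1 / v 2) (v 3 / v 2) (v 4 / v 2) (v 5 / v 2))
          (pvec_ne_zero _ _ _ _ _) = x := by
        conv_rhs => rw [← x.mk_rep]
        exact (Projectivization.mk_eq_mk_iff' ℂ _ _ _ _).mpr ⟨(v 2)⁻¹, hveq.symm⟩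
      have htan : tangencySystem α β
          (pvec (v 0 / v 2) (v 1 / v 2) (v 3 / v 2) (v 4 / v 2) (v 5 / v 2)) := by
        rw [hveq]
        exact tangency_smul α β _ _ hx
      obtain ⟨i, hvec⟩ := solV_complete α β g k u w _ _ _ _ _ hA hB hgB hkB hu hw htan
      refine ⟨i, ?_⟩
      rw [← hxmk, hF]
      exact ((Projectivization.mk_eq_mk_iff' ℂ _ _ _ _).mpr
        ⟨1, by rw [one_smul]; exact hvec.symm⟩).symm
    · rintro ⟨i, rfl⟩
      exact (tangency_rep_iff α β _ (solV_ne_zero g k u w i)).mpr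
        (solV_tangency α β g k u w hgB hkB hu hw i)
  rw [hset]
  have hFinj : Function.Injective F := fun i i' h => solV_point_inj g k u w hg0 hk0 hu0 hw0 h
  rw [← Nat.card_coe_set_eq, Nat.card_range_of_injective hFinj,
    Nat.card_eq_fintype_card]
  decide
end

section
/- Let α, β satisfy 0 < α < 3 - 2√2 and 0 < β < 3 - 2√2. Then all 32 solutions in P⁵ of the system (i) -β·p₀₂² - β·p₁₃² + (1-α)(1-β)·p₀₃² = 0, (ii) p₀₁p₂₃ - p₀₂p₁₃ + p₀₃p₁₂ = 0, (iii) α·p₀₁² = α·p₀₃² = β·p₁₂² = β·p₂₃² are real, i.e., each solution is represented by a point with all coordinates real. -/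
/-- A complex number whose square is a nonnegative real is real. -/
lemma im_eq_zero_of_sq_eq_real (z : ℂ) (r : ℝ) (hr : 0 ≤ r) (h : z ^ 2 = (r : ℂ)) :
    z.im = 0 := by
  have hs : ((Real.sqrt r : ℝ) : ℂ) ^ 2 = (r : ℂ) := by
    norm_cast
    rw [Real.sq_sqrt hr]
  have hz : (z - (Real.sqrt r : ℂ)) * (z + (Real.sqrt r : ℂ)) = 0 := by
    linear_combination h - hs
  rcases mul_eq_zero.mp hz with h' | h'
  · have : z = ((Real.sqrt r : ℝ) : ℂ) := by linear_combination h'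
    simp [this]
  · have : z = -((Real.sqrt r : ℝ) : ℂ) := by linear_combination h'
    simp [this]

/-- If a real's square equals `r ≥ 0` and `s ≥ 0` with `s^2 = r`, then `-s ≤ t ≤ s`. -/
lemma abs_le_of_sq_eq (t s : ℝ) (hs : 0 ≤ s) (h : t ^ 2 = s ^ 2) : -s ≤ t ∧ t ≤ s := by
  constructor <;> nlinarith [sq_nonneg (t - s), sq_nonneg (t + s)]

/-- For `0 < α, β < 3 - 2√2`, every solution in `ℙ⁵` of the tangency system is
real, i.e., is represented by a vector with all coordinates real. -/
theorem stmt_13 (α β : ℝ) (hα0 : 0 < α) (hα : α < 3 - 2 * Real.sqrt 2)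
    (hβ0 : 0 < β) (hβ : β < 3 - 2 * Real.sqrt 2)
    (x : Projectivization ℂ (Fin 6 → ℂ)) (hx : tangencySystem α β x.rep) :
    ∃ (v : Fin 6 → ℝ) (hv : (fun i => (v i : ℂ)) ≠ 0),
      x = Projectivization.mk ℂ (fun i => (v i : ℂ)) hv := by
  classical
  obtain ⟨h1, h2, h3, h4, h5⟩ := hx
  set w : Fin 6 → ℂ := x.rep with hwdef
  have hw0 : w ≠ 0 := x.rep_nonzero
  have hαC : (α : ℂ) ≠ 0 := by exact_mod_cast hα0.ne'
  have hβC : (β : ℂ) ≠ 0 := by exact_mod_cast hβ0.ne'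
  -- basic real facts
  have hs2 : Real.sqrt 2 ^ 2 = 2 := Real.sq_sqrt (by norm_num)
  have hs2nn : 0 ≤ Real.sqrt 2 := Real.sqrt_nonneg 2
  have hα1 : α < 1 := by nlinarith
  have hβ1 : β < 1 := by nlinarith
  have hsa : Real.sqrt α ^ 2 = α := Real.sq_sqrt hα0.le
  have hsb : Real.sqrt β ^ 2 = β := Real.sq_sqrt hβ0.le
  have hsann : 0 ≤ Real.sqrt α := Real.sqrt_nonneg α
  have hsbnn : 0 ≤ Real.sqrt β := Real.sqrt_nonneg β
  have hsblt : 0 < Real.sqrt β := Real.sqrt_pos.mpr hβ0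
  -- key inequality : (1-α)(1-β) > 4 √α √β
  have hs2gt : 1 < Real.sqrt 2 := by nlinarith
  have hsalt : Real.sqrt α < Real.sqrt 2 - 1 := by
    by_contra h
    push_neg at h
    nlinarith [sq_nonneg (Real.sqrt α - (Real.sqrt 2 - 1))]
  have hsblt2 : Real.sqrt β < Real.sqrt 2 - 1 := by
    by_contra h
    push_neg at h
    nlinarith [sq_nonneg (Real.sqrt β - (Real.sqrt 2 - 1))]
  have hkey1 : 2 * Real.sqrt α < 1 - α := by nlinarith
  have hkey2 : 2 * Real.sqrt β < 1 - β := by nlinarith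
  have hkey : 4 * (Real.sqrt α * Real.sqrt β) < (1 - α) * (1 - β) := by nlinarith
  -- w 2 ≠ 0
  have hw2 : w 2 ≠ 0 := by
    intro h0
    have e0 : w 0 = 0 := by
      have : (α : ℂ) * (w 0) ^ 2 = 0 := by rw [h3, h0]; ring
      have := (mul_eq_zero.mp this).resolve_left hαC
      exact pow_eq_zero_iff (n := 2) (by norm_num) |>.mp this
    have e3 : w 3 = 0 := by
      have : (β : ℂ) * (w 3) ^ 2 = 0 := by rw [← h4, h0]; ring
      have := (mul_eq_zero.mp this).resolve_left hβC
      exact pow_eq_zero_iff (n := 2) (by norm_num) |>.mp this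
    have e5 : w 5 = 0 := by
      have : (β : ℂ) * (w 5) ^ 2 = 0 := by rw [← h5, e3]; ring
      have := (mul_eq_zero.mp this).resolve_left hβC
      exact pow_eq_zero_iff (n := 2) (by norm_num) |>.mp this
    have e14 : w 1 * w 4 = 0 := by linear_combination -h2 + w 5 * e0 + w 2 * e3
    have esum : (w 1) ^ 2 + (w 4) ^ 2 = 0 := by
      have : (β : ℂ) * ((w 1) ^ 2 + (w 4) ^ 2) = 0 := by
        linear_combination -h1 + ((1 : ℂ) - α) * ((1 : ℂ) - β) * (w 2 + 0) * h0
      exact (mul_eq_zero.mp this).resolve_left hβC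
    have e1 : w 1 = 0 ∧ w 4 = 0 := by
      rcases mul_eq_zero.mp e14 with h' | h'
      · refine ⟨h', ?_⟩
        have : (w 4) ^ 2 = 0 := by linear_combination esum - (w 1 + 0) * h'
        exact pow_eq_zero_iff (n := 2) (by norm_num) |>.mp this
      · refine ⟨?_, h'⟩
        have : (w 1) ^ 2 = 0 := by linear_combination esum - (w 4 + 0) * h'
        exact pow_eq_zero_iff (n := 2) (by norm_num) |>.mp this
    apply hw0
    funext i
    fin_cases i
    · exact e0
    · exact e1.1
    · exact h0
    · exact e3
    · exact e1.2
    · exact e5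
  -- normalize
  set u : Fin 6 → ℂ := fun i => (w 2)⁻¹ * w i with hudef
  have hu2 : u 2 = 1 := inv_mul_cancel₀ hw2
  have c2 : ((w 2)⁻¹) ^ 2 * (w 2) ^ 2 = 1 := by
    rw [← mul_pow, inv_mul_cancel₀ hw2]; norm_num
  -- equations for u
  have f1 : -(β : ℂ) * (u 1) ^ 2 - (β : ℂ) * (u 4) ^ 2
      + ((1 : ℂ) - α) * ((1 : ℂ) - β) * (u 2) ^ 2 = 0 := by
    simp only [hudef]
    linear_combination ((w 2)⁻¹) ^ 2 * h1
  have f2 : u 0 * u 5 - u 1 * u 4 + u 2 * u 3 = 0 := by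
    simp only [hudef]
    linear_combination ((w 2)⁻¹) ^ 2 * h2
  have f3 : (α : ℂ) * (u 0) ^ 2 = (α : ℂ) * (u 2) ^ 2 := by
    simp only [hudef]
    linear_combination ((w 2)⁻¹) ^ 2 * h3
  have f4 : (α : ℂ) * (u 2) ^ 2 = (β : ℂ) * (u 3) ^ 2 := by
    simp only [hudef]
    linear_combination ((w 2)⁻¹) ^ 2 * h4
  have f5 : (β : ℂ) * (u 3) ^ 2 = (β : ℂ) * (u 5) ^ 2 := by
    simp only [hudef]
    linear_combination ((w 2)⁻¹) ^ 2 * h5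
  -- coordinate facts
  have g0 : (u 0) ^ 2 = ((1 : ℝ) : ℂ) := by
    have h' : (α : ℂ) * (u 0) ^ 2 = (α : ℂ) * ((1 : ℝ) : ℂ) := by
      rw [f3, hu2]
      push_cast
      ring
    exact mul_left_cancel₀ hαC h'
  have g3 : (u 3) ^ 2 = ((α / β : ℝ) : ℂ) := by
    have h' : (β : ℂ) * (u 3) ^ 2 = (β : ℂ) * ((α / β : ℝ) : ℂ) := by
      rw [← f4, hu2]
      push_cast
      field_simp
    exact mul_left_cancel₀ hβC h'
  have g5 : (u 5) ^ 2 = ((α / β : ℝ) : ℂ) := by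
    have h' := mul_left_cancel₀ hβC f5
    rw [← h', g3]
  have habr : 0 ≤ α / β := div_nonneg hα0.le hβ0.le
  have i0 : (u 0).im = 0 := im_eq_zero_of_sq_eq_real _ 1 zero_le_one g0
  have i3 : (u 3).im = 0 := im_eq_zero_of_sq_eq_real _ _ habr g3
  have i5 : (u 5).im = 0 := im_eq_zero_of_sq_eq_real _ _ habr g5
  have i2 : (u 2).im = 0 := by rw [hu2]; rfl
  -- real values
  set a0 : ℝ := (u 0).re with ha0
  set a3 : ℝ := (u 3).re with ha3
  set a5 : ℝ := (u 5).re with ha5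
  have hu0 : u 0 = (a0 : ℂ) := Complex.ext rfl (by simp [i0])
  have hu3 : u 3 = (a3 : ℂ) := Complex.ext rfl (by simp [i3])
  have hu5 : u 5 = (a5 : ℂ) := Complex.ext rfl (by simp [i5])
  clear_value a0 a3 a5
  have ra0 : a0 ^ 2 = 1 := by
    have : ((a0 ^ 2 : ℝ) : ℂ) = ((1 : ℝ) : ℂ) := by push_cast; rw [← hu0]; exact_mod_cast g0
    exact_mod_cast this
  have ra3 : a3 ^ 2 = α / β := by
    have : ((a3 ^ 2 : ℝ) : ℂ) = ((α / β : ℝ) : ℂ) := by push_cast; rw [← hu3]; exact_mod_cast g3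
    exact_mod_cast this
  have ra5 : a5 ^ 2 = α / β := by
    have : ((a5 ^ 2 : ℝ) : ℂ) = ((α / β : ℝ) : ℂ) := by push_cast; rw [← hu5]; exact_mod_cast g5
    exact_mod_cast this
  -- the product u1 * u4 is real
  set d : ℝ := a0 * a5 + a3 with hd
  clear_value d
  have g14 : u 1 * u 4 = (d : ℂ) := by
    have : u 1 * u 4 = u 0 * u 5 + u 2 * u 3 := by linear_combination -f2
    rw [this, hu0, hu5, hu3, hu2]
    push_cast [hd]
    ring
  set cr : ℝ := (1 - α) * (1 - β) / β with hcr
  clear_value cr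
  have gsum : (u 1) ^ 2 + (u 4) ^ 2 = (cr : ℂ) := by
    have h' : (β : ℂ) * ((u 1) ^ 2 + (u 4) ^ 2) = (β : ℂ) * (cr : ℂ) := by
      have : (β : ℂ) * (cr : ℂ) = ((1 : ℂ) - α) * ((1 : ℂ) - β) := by
        push_cast [hcr]
        field_simp
      rw [this]
      linear_combination -f1 + ((1 : ℂ) - α) * ((1 : ℂ) - β) * (u 2 + 1) * hu2
    exact mul_left_cancel₀ hβC h'
  -- bounds: |β * d contributions| ≤ √α √β
  have bX : -(Real.sqrt α * Real.sqrt β) ≤ β * (a0 * a5) ∧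
      β * (a0 * a5) ≤ Real.sqrt α * Real.sqrt β := by
    apply abs_le_of_sq_eq _ _ (mul_nonneg hsann hsbnn)
    calc (β * (a0 * a5)) ^ 2 = β ^ 2 * a0 ^ 2 * a5 ^ 2 := by ring
      _ = β ^ 2 * 1 * (α / β) := by rw [ra0, ra5]
      _ = (Real.sqrt α * Real.sqrt β) ^ 2 := by
          rw [mul_pow, hsa, hsb]; field_simp
  have bY : -(Real.sqrt α * Real.sqrt β) ≤ β * a3 ∧
      β * a3 ≤ Real.sqrt α * Real.sqrt β := by
    apply abs_le_of_sq_eq _ _ (mul_nonneg hsann hsbnn)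
    calc (β * a3) ^ 2 = β ^ 2 * a3 ^ 2 := by ring
      _ = β ^ 2 * (α / β) := by rw [ra3]
      _ = (Real.sqrt α * Real.sqrt β) ^ 2 := by
          rw [mul_pow, hsa, hsb]; field_simp
  have hcp : 0 < cr + 2 * d := by
    have hb : 0 < β * (cr + 2 * d) := by
      have : β * (cr + 2 * d) = (1 - α) * (1 - β) + 2 * (β * (a0 * a5)) + 2 * (β * a3) := by
        rw [hcr, hd]; field_simp; ring
      rw [this]
      linarith only [bX.1, bY.1, hkey]
    rcases mul_pos_iff.mp hb with ⟨_, h⟩ | ⟨h, _⟩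
    · exact h
    · exact absurd h (not_lt.mpr hβ0.le)
  have hcm : 0 < cr - 2 * d := by
    have hb : 0 < β * (cr - 2 * d) := by
      have : β * (cr - 2 * d) = (1 - α) * (1 - β) - 2 * (β * (a0 * a5)) - 2 * (β * a3) := by
        rw [hcr, hd]; field_simp; ring
      rw [this]
      linarith only [bX.2, bY.2, hkey]
    rcases mul_pos_iff.mp hb with ⟨_, h⟩ | ⟨h, _⟩
    · exact h
    · exact absurd h (not_lt.mpr hβ0.le)
  have gplus : (u 1 + u 4) ^ 2 = ((cr + 2 * d : ℝ) : ℂ) := by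
    push_cast
    linear_combination gsum + 2 * g14
  have gminus : (u 1 - u 4) ^ 2 = ((cr - 2 * d : ℝ) : ℂ) := by
    push_cast
    linear_combination gsum - 2 * g14
  have ip : (u 1 + u 4).im = 0 := im_eq_zero_of_sq_eq_real _ _ hcp.le gplus
  have im' : (u 1 - u 4).im = 0 := im_eq_zero_of_sq_eq_real _ _ hcm.le gminus
  have i1 : (u 1).im = 0 := by
    have h1' : (u 1).im + (u 4).im = 0 := by simpa using ip
    have h2' : (u 1).im - (u 4).im = 0 := by simpa using im'
    linarith
  have i4 : (u 4).im = 0 := by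
    have h1' : (u 1).im + (u 4).im = 0 := by simpa using ip
    linarith
  -- conclude
  refine ⟨fun i => (u i).re, ?_, ?_⟩
  · intro h
    have h2' : (((u 2).re : ℝ) : ℂ) = 0 := congrFun h 2
    have hre : (u 2).re = 0 := by exact_mod_cast h2'
    rw [hu2] at hre
    simp at hre
  · have huu : (fun i => (((u i).re : ℝ) : ℂ)) = u := by
      funext i
      have him : (u i).im = 0 := by
        fin_cases i
        · simpa using i0
        · simpa using i1
        · simpa using i2
        · simpa using i3
        · simpa using i4
        · simpa using i5
      refine Complex.ext ?_ ?_
      · simp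
      · simp [him]
    have hvne : (fun i => (((u i).re : ℝ) : ℂ)) ≠ 0 := by
      intro h
      have h2' : (((u 2).re : ℝ) : ℂ) = 0 := congrFun h 2
      have hre : (u 2).re = 0 := by exact_mod_cast h2'
      rw [hu2] at hre
      simp at hre
    rw [← x.mk_rep]
    symm
    rw [Projectivization.mk_eq_mk_iff]
    refine ⟨Units.mk0 (w 2)⁻¹ (inv_ne_zero hw2), ?_⟩
    funext i
    have := congrFun huu i
    simpa [hudef] using this.symm
end
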